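/- arXiv:2410.23288 — 2 statements merged into one kernel-verified Lean document; each statement's English description precedes it below -/
import Mathlib

section
/- For any nonempty periodic point set S = Λ + M in ℝ^n, the infimum in the definition of the bridge length is attained: β(S) itself bridges S, i.e. for any p, q ∈ S there is a finite sequence p = p_1, …, p_k = q of points of S with |p_i − p_{i+1}| ≤ β(S) for all i. -/
noncomputable section

/-- `δ` bridges `S`: any two points of `S` are joined by a finite sequence of points of `S`
with consecutive distances at most `δ`. -/
def Bridges {n : ℕ} (δ : ℝ) (S : Set (EuclideanSpace ℝ (Fin n))) : Prop :=
  ∀ p ∈ S, ∀ q ∈ S, ∃ k : ℕ, ∃ f : Fin (k + 1) → EuclideanSpace ℝ (Fin n),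
    f 0 = p ∧ f (Fin.last k) = q ∧ (∀ i, f i ∈ S) ∧
    ∀ i : Fin k, dist (f i.castSucc) (f i.succ) ≤ δ

/-- The bridge length β(S): the infimum of all δ ≥ 0 that bridge S. -/
def bridgeLength {n : ℕ} (S : Set (EuclideanSpace ℝ (Fin n))) : ℝ :=
  sInf {δ : ℝ | 0 ≤ δ ∧ Bridges δ S}

/-- The lattice Λ generated by the basis `b`: the ℤ-span of the basis vectors. -/
def lat {n : ℕ} (b : Module.Basis (Fin n) ℝ (EuclideanSpace ℝ (Fin n))) :
    Submodule ℤ (EuclideanSpace ℝ (Fin n)) :=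
  Submodule.span ℤ (Set.range (b : Fin n → EuclideanSpace ℝ (Fin n)))

/-- The unit cell U of the basis `b`. -/
def unitCell {n : ℕ} (b : Module.Basis (Fin n) ℝ (EuclideanSpace ℝ (Fin n))) :
    Set (EuclideanSpace ℝ (Fin n)) :=
  {x | ∀ i, 0 ≤ b.repr x i ∧ b.repr x i < 1}

/-- The periodic point set S = Λ + M. -/
def periodicSet {n : ℕ} (b : Module.Basis (Fin n) ℝ (EuclideanSpace ℝ (Fin n)))
    (M : Set (EuclideanSpace ℝ (Fin n))) : Set (EuclideanSpace ℝ (Fin n)) :=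
  {x | ∃ l ∈ (lat b : Set (EuclideanSpace ℝ (Fin n))), ∃ p ∈ M, x = l + p}

/-!
Some `δ` bridges `S = Λ + M`: move inside a translate of `M` in one step, then walk along
basis vectors. The distances occurring in `S` form a locally finite subset of `ℝ`, because `Λ`
meets every bounded set in finitely many points. Hence there is a gap `(β(S), u]` free of
distances, and any bridging `δ < u` only ever uses steps of length at most `β(S)`.
-/

open Set Filter Topology Bornology Relation
open scoped Pointwise

lemma exists_gt_forall_le_of_finite_inter_Ioc {D : Set ℝ} {a b : ℝ} (hab : a < b)
    (hD : (D ∩ Ioc a b).Finite) : ∃ u > a, ∀ d ∈ D, d ≤ u → d ≤ a := by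
  have hnhds : (D ∩ Ioc a b)ᶜ ∩ Iio b ∈ 𝓝[>] a :=
    inter_mem (mem_nhdsWithin_of_mem_nhds (hD.isClosed.isOpen_compl.mem_nhds
      fun h => lt_irrefl a h.2.1)) (mem_nhdsWithin_of_mem_nhds (Iio_mem_nhds hab))
  obtain ⟨u, hau, hu⟩ := mem_nhdsGT_iff_exists_Ioc_subset.1 hnhds
  refine ⟨u, hau, fun d hd hdu => not_lt.1 fun had => ?_⟩
  obtain ⟨hdF, hdb⟩ := hu ⟨had, hdu⟩
  exact hdF ⟨hd, had, hdb.le⟩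

section Walks

variable {E : Type*} [SeminormedAddCommGroup E]

def bridgeStep (δ : ℝ) (S : Set E) (x y : E) : Prop :=
  x ∈ S ∧ y ∈ S ∧ dist x y ≤ δ

instance (δ : ℝ) (S : Set E) : Std.Symm (bridgeStep δ S) :=
  ⟨fun _ _ ⟨hx, hy, h⟩ => ⟨hy, hx, dist_comm (α := E) _ _ ▸ h⟩⟩

lemma reflTransGen_bridgeStep_add {S s : Set E} {δ : ℝ}
    (hS : ∀ g ∈ AddSubgroup.closure s, ∀ x ∈ S, g + x ∈ S) (hs : ∀ g ∈ s, ‖g‖ ≤ δ)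
    {g : E} (hg : g ∈ AddSubgroup.closure s) {x : E} (hx : x ∈ S) :
    ReflTransGen (bridgeStep δ S) x (g + x) := by
  induction hg using AddSubgroup.closure_induction generalizing x with
  | mem g hgs =>
    exact .single ⟨hx, hS g (AddSubgroup.subset_closure hgs) x hx,
      by rw [dist_comm, dist_add_self_left]; exact hs g hgs⟩
  | zero => rw [zero_add]
  | add g h hg hh ihg ihh =>
    rw [add_assoc]
    exact (ihh hx).trans (ihg (hS h hh x hx))
  | neg g hg ih =>
    have := ih (hS (-g) (neg_mem hg) x hx)
    rw [add_neg_cancel_left] at this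
    exact Std.Symm.symm _ _ this

end Walks

variable {n : ℕ}

lemma bridges_of_reflTransGen {δ : ℝ} {S : Set (EuclideanSpace ℝ (Fin n))}
    (h : ∀ p ∈ S, ∀ q ∈ S, ReflTransGen (bridgeStep δ S) p q) : Bridges δ S := by
  intro p hp q hq
  induction h p hp q hq with
  | refl => exact ⟨0, fun _ => p, rfl, rfl, fun _ => hp, fun i => i.elim0⟩
  | @tail y z _ hyz ih =>
    obtain ⟨k, f, hf0, hfk, hfS, hfd⟩ := ih hyz.1
    refine ⟨k + 1, Fin.snoc f z, ?_, Fin.snoc_last _ _, ?_, ?_⟩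
    · exact (Fin.snoc_castSucc (α := fun _ => EuclideanSpace ℝ (Fin n)) _ _ 0).trans hf0
    · refine Fin.lastCases ?_ fun i => ?_
      · rw [Fin.snoc_last]; exact hyz.2.1
      · rw [Fin.snoc_castSucc]; exact hfS i
    · refine Fin.lastCases ?_ fun i => ?_
      · rw [Fin.succ_last, Fin.snoc_last, Fin.snoc_castSucc, hfk]; exact hyz.2.2
      · rw [Fin.succ_castSucc, Fin.snoc_castSucc, Fin.snoc_castSucc]; exact hfd i

lemma Bridges.of_dist_le {δ β : ℝ} {S : Set (EuclideanSpace ℝ (Fin n))} (h : Bridges δ S)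
    (hβ : ∀ p ∈ S, ∀ q ∈ S, dist p q ≤ δ → dist p q ≤ β) : Bridges β S := by
  intro p hp q hq
  obtain ⟨k, f, hf0, hfk, hfS, hfd⟩ := h p hp q hq
  exact ⟨k, f, hf0, hfk, hfS, fun i => hβ _ (hfS _) _ (hfS _) (hfd i)⟩

lemma bridges_bridgeLength {S : Set (EuclideanSpace ℝ (Fin n))}
    (hS : ∃ δ, 0 ≤ δ ∧ Bridges δ S) (hdist : ∀ C, (image2 dist S S ∩ Iic C).Finite) :
    Bridges (bridgeLength S) S := by
  obtain ⟨u, hu, hgap⟩ := exists_gt_forall_le_of_finite_inter_Ioc (lt_add_one (bridgeLength S))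
    ((hdist _).subset (inter_subset_inter_right _ Ioc_subset_Iic_self))
  obtain ⟨δ, ⟨-, hδ⟩, hδu⟩ := exists_lt_of_csInf_lt hS hu
  exact hδ.of_dist_le fun p hp q hq hpq => hgap _ (mem_image2_of_mem hp hq) (hpq.trans hδu.le)

section Periodic

variable (b : Module.Basis (Fin n) ℝ (EuclideanSpace ℝ (Fin n)))
  {M : Set (EuclideanSpace ℝ (Fin n))}

lemma add_mem_periodicSet {l x : EuclideanSpace ℝ (Fin n)} (hl : l ∈ lat b)
    (hx : x ∈ periodicSet b M) : l + x ∈ periodicSet b M := by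
  obtain ⟨l', hl', m, hm, rfl⟩ := hx
  exact ⟨l + l', (lat b).add_mem hl hl', m, hm, (add_assoc l l' m).symm⟩

lemma mem_lat_iff_mem_closure {l : EuclideanSpace ℝ (Fin n)} :
    l ∈ lat b ↔ l ∈ AddSubgroup.closure (range b) := by
  rw [lat, ← Submodule.mem_toAddSubgroup, Submodule.span_int_eq_addSubgroupClosure]

lemma bridges_periodicSet (hM : M.Finite) :
    Bridges (Metric.diam M + ∑ i, ‖b i‖) (periodicSet b M) := by
  have hdiam : Metric.diam M ≤ Metric.diam M + ∑ i, ‖b i‖ :=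
    le_add_of_nonneg_right (by positivity)
  have hbasis : ∀ g ∈ range b, ‖g‖ ≤ Metric.diam M + ∑ i, ‖b i‖ := by
    rintro _ ⟨i, rfl⟩
    exact (Finset.single_le_sum (fun j _ => norm_nonneg (b j)) (Finset.mem_univ i)).trans
      (le_add_of_nonneg_left Metric.diam_nonneg)
  apply bridges_of_reflTransGen
  rintro _ ⟨l, hl, m, hm, rfl⟩ _ ⟨l', hl', m', hm', rfl⟩
  have hlm' : l + m' ∈ periodicSet b M := ⟨l, hl, m', hm', rfl⟩
  have hwalk := reflTransGen_bridgeStep_add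
    (fun g hg x hx => add_mem_periodicSet b ((mem_lat_iff_mem_closure b).2 hg) hx) hbasis
    ((mem_lat_iff_mem_closure b).1 ((lat b).sub_mem hl' hl)) hlm'
  rw [← add_assoc, sub_add_cancel] at hwalk
  exact .head ⟨⟨l, hl, m, hm, rfl⟩, hlm', by
    rw [dist_add_left]; exact (Metric.dist_le_diam_of_mem hM.isBounded hm hm').trans hdiam⟩
    hwalk

lemma finite_periodicSet_inter (hM : M.Finite) {s : Set (EuclideanSpace ℝ (Fin n))}
    (hs : IsBounded s) : (periodicSet b M ∩ s).Finite := by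
  refine ((ZSpan.setFinite_inter b (hs.sub hM.isBounded)).add hM).subset ?_
  rintro _ ⟨⟨l, hl, m, hm, rfl⟩, hx⟩
  exact ⟨l, ⟨⟨l + m, hx, m, hm, add_sub_cancel_right l m⟩, hl⟩, m, hm, rfl⟩

lemma finite_dist_periodicSet (hM : M.Finite) (C : ℝ) :
    (image2 dist (periodicSet b M) (periodicSet b M) ∩ Iic C).Finite := by
  refine ((finite_periodicSet_inter b hM (hM.isBounded.cthickening (δ := C))).image2 dist
    hM).subset ?_
  rintro _ ⟨⟨_, ⟨l, hl, m, hm, rfl⟩, _, ⟨l', hl', m', hm', rfl⟩, rfl⟩, hC⟩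
  -- translating both points by `-l'` preserves their distance and moves the second one into `M`
  have hdist : dist (l - l' + m) m' = dist (l + m) (l' + m') := by
    rw [dist_eq_norm, dist_eq_norm]; congr 1; abel
  refine ⟨l - l' + m, ⟨add_mem_periodicSet b ((lat b).sub_mem hl hl') ⟨0, (lat b).zero_mem, m,
    hm, (zero_add m).symm⟩, Metric.mem_cthickening_of_dist_le _ m' C M hm' (hdist ▸ hC)⟩,
    m', hm', hdist⟩

end Periodic

theorem bridgeLength_bridges_general {n : ℕ}
    (b : Module.Basis (Fin n) ℝ (EuclideanSpace ℝ (Fin n)))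
    (M : Set (EuclideanSpace ℝ (Fin n))) (hMfin : M.Finite) :
    Bridges (bridgeLength (periodicSet b M)) (periodicSet b M) :=
  bridges_bridgeLength ⟨_, by positivity, bridges_periodicSet b hMfin⟩
    (finite_dist_periodicSet b hMfin)

/-- For a nonempty periodic point set S = Λ + M, the infimum in the
definition of the bridge length is attained: β(S) itself bridges S. -/
theorem bridgeLength_bridges {n : ℕ}
    (b : Module.Basis (Fin n) ℝ (EuclideanSpace ℝ (Fin n)))
    (M : Set (EuclideanSpace ℝ (Fin n))) (hMfin : M.Finite) (hMne : M.Nonempty)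
    (hMU : M ⊆ unitCell b) :
    Bridges (bridgeLength (periodicSet b M)) (periodicSet b M) :=
  bridgeLength_bridges_general b M hMfin
end
end

section
/- Let S = Λ + M be a nonempty periodic point set in ℝ^n. Then the bridge length β(S) equals the infimum of all numbers 2r > 0 such that the union of the closed balls of radius r centred at all points of S is a connected subset of ℝ^n. -/
/-!
For `r ≥ 0`, `2r` bridges `S` exactly when the union of the closed `r`-balls around `S` is
connected. A step of length `≤ 2r` makes two balls meet at the midpoint, which gives one direction.
Conversely, the balls around the points reachable from `p` by such steps and the balls around the
remaining points form two closed sets covering the union (closed because a periodic set meets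
every bounded set in finitely many points), so by connectedness they meet, and a common point
yields a step of length `≤ 2r` between the two classes. Some `δ` bridges `S` because the balls of
radius `∑ ‖bᵢ‖` already cover `ℝⁿ`, and since bridging is monotone in `δ`, the infimum over
`δ ≥ 0` equals the infimum over `δ > 0`.
-/

noncomputable section

open Metric Set Relation

lemma csInf_setOf_nonneg_eq_csInf_setOf_pos {P : ℝ → Prop} (hP : Monotone P)
    (hne : ∃ a, 0 ≤ a ∧ P a) :
    sInf {a | 0 ≤ a ∧ P a} = sInf {a | 0 < a ∧ P a} := by
  obtain ⟨a₀, ha₀, hPa₀⟩ := hne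
  apply le_antisymm
  · refine le_csInf ⟨a₀ + 1, by linarith, hP (by linarith) hPa₀⟩ fun a ha => ?_
    exact csInf_le ⟨0, fun _ h => h.1⟩ ⟨ha.1.le, ha.2⟩
  · refine le_csInf ⟨a₀, ha₀, hPa₀⟩ fun a ha => le_of_forall_pos_le_add fun ε hε => ?_
    exact csInf_le ⟨0, fun _ h => h.1.le⟩ ⟨by linarith [ha.1], hP (by linarith) ha.2⟩

section LocallyFinite

variable {X : Type*} [PseudoMetricSpace X] {S : Set X}

lemma locallyFinite_closedBall_of_finite_inter (hS : ∀ z R, (S ∩ closedBall z R).Finite)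
    (r : ℝ) : LocallyFinite fun x : S => closedBall (x : X) r := by
  intro z
  refine ⟨ball z 1, ball_mem_nhds z one_pos, ?_⟩
  refine ((hS z (r + 1)).preimage Subtype.val_injective.injOn).subset ?_
  rintro ⟨x, hx⟩ ⟨y, hyx, hyz⟩
  exact ⟨hx, (dist_triangle_left x z y).trans (add_le_add hyx hyz.le)⟩

lemma isClosed_biUnion_closedBall_of_finite_inter (hS : ∀ z R, (S ∩ closedBall z R).Finite)
    (r : ℝ) : IsClosed (⋃ x ∈ S, closedBall x r) := by
  rw [biUnion_eq_iUnion]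
  exact (locallyFinite_closedBall_of_finite_inter hS r).isClosed_iUnion
    fun _ => isClosed_closedBall

end LocallyFinite

section Bridges

variable {n : ℕ}

def BridgeStep (δ : ℝ) (S : Set (EuclideanSpace ℝ (Fin n))) (x y : EuclideanSpace ℝ (Fin n)) :
    Prop :=
  x ∈ S ∧ y ∈ S ∧ dist x y ≤ δ

variable {δ : ℝ} {S : Set (EuclideanSpace ℝ (Fin n))}

lemma reflTransGen_bridgeStep_of_chain {k : ℕ} {f : Fin (k + 1) → EuclideanSpace ℝ (Fin n)}
    (hf : ∀ i, f i ∈ S)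
    (hstep : ∀ i : Fin k, dist (f i.castSucc) (f i.succ) ≤ δ) :
    ReflTransGen (BridgeStep δ S) (f 0) (f (Fin.last k)) :=
  Fin.induction .refl (fun i ih => ih.tail ⟨hf _, hf _, hstep i⟩) (Fin.last k)

lemma exists_chain_of_reflTransGen_bridgeStep {p q : EuclideanSpace ℝ (Fin n)} (hp : p ∈ S)
    (h : ReflTransGen (BridgeStep δ S) p q) :
    ∃ k : ℕ, ∃ f : Fin (k + 1) → EuclideanSpace ℝ (Fin n),
      f 0 = p ∧ f (Fin.last k) = q ∧ (∀ i, f i ∈ S) ∧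
        ∀ i : Fin k, dist (f i.castSucc) (f i.succ) ≤ δ := by
  induction h with
  | refl => exact ⟨0, fun _ => p, rfl, rfl, fun _ => hp, fun i => i.elim0⟩
  | @tail x y _ hxy ih =>
    obtain ⟨k, f, hf0, hfk, hf, hstep⟩ := ih
    refine ⟨k + 1, Fin.snoc f y, ?_, Fin.snoc_last .., Fin.lastCases ?_ fun i => ?_,
      Fin.lastCases ?_ fun i => ?_⟩
    · rw [← Fin.castSucc_zero, Fin.snoc_castSucc, hf0]
    · rw [Fin.snoc_last]
      exact hxy.2.1
    · rw [Fin.snoc_castSucc]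
      exact hf i
    · rw [Fin.succ_last, Fin.snoc_last, Fin.snoc_castSucc, hfk]
      exact hxy.2.2
    · rw [Fin.succ_castSucc, Fin.snoc_castSucc, Fin.snoc_castSucc]
      exact hstep i

lemma bridges_iff_reflTransGen :
    Bridges δ S ↔ ∀ p ∈ S, ∀ q ∈ S, ReflTransGen (BridgeStep δ S) p q := by
  refine ⟨fun h p hp q hq => ?_, fun h p hp q hq =>
    exists_chain_of_reflTransGen_bridgeStep hp (h p hp q hq)⟩
  obtain ⟨k, f, rfl, rfl, hf, hstep⟩ := h p hp q hq
  exact reflTransGen_bridgeStep_of_chain hf hstep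

lemma bridges_mono : Monotone fun δ => Bridges δ S := by
  intro δ δ' hδ h p hp q hq
  obtain ⟨k, f, hf0, hfk, hf, hstep⟩ := h p hp q hq
  exact ⟨k, f, hf0, hfk, hf, fun i => (hstep i).trans hδ⟩

lemma isConnected_biUnion_closedBall_of_bridges {r : ℝ} (hr : 0 ≤ r) (hS : S.Nonempty)
    (h : Bridges (2 * r) S) : IsConnected (⋃ p ∈ S, closedBall p r) := by
  refine IsConnected.biUnion_of_reflTransGen hS
    (fun p _ => (convex_closedBall p r).isConnected (nonempty_closedBall.2 hr)) ?_
  intro p hp q hq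
  refine ReflTransGen.mono ?_ _ _ (bridges_iff_reflTransGen.1 h p hp q hq)
  rintro x y ⟨hx, -, hxy⟩
  refine ⟨⟨midpoint ℝ x y, ?_, ?_⟩, hx⟩ <;>
    simp only [mem_closedBall, dist_midpoint_left, dist_midpoint_right, Real.norm_two] <;>
    linarith

lemma bridges_of_isConnected_biUnion_closedBall (hS : ∀ z R, (S ∩ closedBall z R).Finite)
    {r : ℝ} (hr : 0 ≤ r) (h : IsConnected (⋃ p ∈ S, closedBall p r)) : Bridges (2 * r) S := by
  refine bridges_iff_reflTransGen.2 fun p hp q hq => ?_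
  by_contra hpq
  set C := {x ∈ S | ReflTransGen (BridgeStep (2 * r) S) p x}
  have hclosed : ∀ T ⊆ S, IsClosed (⋃ x ∈ T, closedBall x r) := fun T hT =>
    isClosed_biUnion_closedBall_of_finite_inter
      (fun z R => (hS z R).subset (inter_subset_inter_left _ hT)) r
  have hball : ∀ {T : Set (EuclideanSpace ℝ (Fin n))} {x}, x ∈ T → x ∈ ⋃ y ∈ T, closedBall y r :=
    fun hx => mem_biUnion hx (mem_closedBall_self hr)
  obtain ⟨z, -, hzC, hzD⟩ := isPreconnected_closed_iff.1 h.isPreconnected _ _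
    (hclosed C (sep_subset _ _)) (hclosed (S \ C) sdiff_subset)
    (by rw [← biUnion_union, union_sdiff_cancel (sep_subset _ _)])
    ⟨p, hball hp, hball (show p ∈ C from ⟨hp, .refl⟩)⟩
    ⟨q, hball hq, hball (show q ∈ S \ C from ⟨hq, fun hqC => hpq hqC.2⟩)⟩
  obtain ⟨x, ⟨hxS, hpx⟩, hzx⟩ := mem_iUnion₂.1 hzC
  obtain ⟨y, ⟨hyS, hyC⟩, hzy⟩ := mem_iUnion₂.1 hzD
  have hxy : dist x y ≤ 2 * r := by
    linarith [dist_triangle_left x y z, mem_closedBall.1 hzx, mem_closedBall.1 hzy]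
  exact hyC ⟨hyS, hpx.tail ⟨hxS, hyS, hxy⟩⟩

end Bridges

section Periodic

variable {n : ℕ} (b : Module.Basis (Fin n) ℝ (EuclideanSpace ℝ (Fin n)))
  {M : Set (EuclideanSpace ℝ (Fin n))}

lemma periodicSet_nonempty (hM : M.Nonempty) : (periodicSet b M).Nonempty :=
  let ⟨m, hm⟩ := hM
  ⟨0 + m, 0, zero_mem _, m, hm, rfl⟩

lemma periodicSet_inter_closedBall_finite (hM : M.Finite) (z : EuclideanSpace ℝ (Fin n))
    (R : ℝ) : (periodicSet b M ∩ closedBall z R).Finite := by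
  refine (hM.biUnion fun m _ =>
    (ZSpan.setFinite_inter b (isBounded_closedBall (x := z - m) (r := R))).image (· + m)).subset
      ?_
  rintro _ ⟨⟨l, hl, m, hm, rfl⟩, hz⟩
  refine mem_biUnion hm ⟨l, ⟨?_, hl⟩, rfl⟩
  rwa [mem_closedBall, ← dist_add_right l (z - m) m, sub_add_cancel]

lemma iUnion_closedBall_periodicSet_eq_univ {m : EuclideanSpace ℝ (Fin n)} (hm : m ∈ M) :
    ⋃ p ∈ periodicSet b M, closedBall p (∑ i, ‖b i‖) = univ := by
  refine eq_univ_of_forall fun x =>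
    mem_biUnion ⟨_, (ZSpan.floor b (x - m)).2, m, hm, rfl⟩ ?_
  have hfract : x - (ZSpan.floor b (x - m) + m) = ZSpan.fract b (x - m) := by
    rw [ZSpan.fract_apply]
    abel
  rw [mem_closedBall, dist_eq_norm, hfract]
  exact ZSpan.norm_fract_le b (x - m)

lemma exists_bridges_periodicSet (hMfin : M.Finite) (hMne : M.Nonempty) :
    ∃ δ, 0 ≤ δ ∧ Bridges δ (periodicSet b M) := by
  obtain ⟨m, hm⟩ := hMne
  have hR : 0 ≤ ∑ i, ‖b i‖ := by positivity
  refine ⟨2 * ∑ i, ‖b i‖, by positivity, bridges_of_isConnected_biUnion_closedBall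
    (periodicSet_inter_closedBall_finite b hMfin) hR ?_⟩
  rw [iUnion_closedBall_periodicSet_eq_univ b hm]
  exact isConnected_univ

lemma isConnected_biUnion_closedBall_periodicSet_iff (hMfin : M.Finite) (hMne : M.Nonempty)
    {r : ℝ} (hr : 0 ≤ r) :
    IsConnected (⋃ p ∈ periodicSet b M, closedBall p r) ↔ Bridges (2 * r) (periodicSet b M) :=
  ⟨bridges_of_isConnected_biUnion_closedBall (periodicSet_inter_closedBall_finite b hMfin) hr,
    isConnected_biUnion_closedBall_of_bridges hr (periodicSet_nonempty b hMne)⟩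

end Periodic

theorem bridgeLength_eq_inf_connected_balls_general {n : ℕ}
    (b : Module.Basis (Fin n) ℝ (EuclideanSpace ℝ (Fin n)))
    (M : Set (EuclideanSpace ℝ (Fin n))) (hMfin : M.Finite) (hMne : M.Nonempty) :
    bridgeLength (periodicSet b M) =
      sInf {d : ℝ | ∃ r : ℝ, 0 < r ∧ d = 2 * r ∧
        IsConnected (⋃ p ∈ periodicSet b M, Metric.closedBall p r)} := by
  have hdiam : ∀ d : ℝ, (∃ r : ℝ, 0 < r ∧ d = 2 * r ∧
      IsConnected (⋃ p ∈ periodicSet b M, closedBall p r)) ↔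
        0 < d ∧ Bridges d (periodicSet b M) := by
    intro d
    constructor
    · rintro ⟨r, hr, rfl, h⟩
      exact ⟨by positivity,
        (isConnected_biUnion_closedBall_periodicSet_iff b hMfin hMne hr.le).1 h⟩
    · rintro ⟨hd, h⟩
      refine ⟨d / 2, by positivity, by ring,
        (isConnected_biUnion_closedBall_periodicSet_iff b hMfin hMne (by positivity)).2 ?_⟩
      rwa [mul_div_cancel₀ _ two_ne_zero]
  simp_rw [hdiam]
  exact csInf_setOf_nonneg_eq_csInf_setOf_pos bridges_mono
    (exists_bridges_periodicSet b hMfin hMne)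

/-- For a nonempty periodic point set S = Λ + M in ℝ^n, the bridge length
β(S) equals the infimum of all numbers 2r > 0 such that the union of the closed balls of
radius r centred at all points of S is a connected subset of ℝ^n. -/
theorem bridgeLength_eq_inf_connected_balls {n : ℕ}
    (b : Module.Basis (Fin n) ℝ (EuclideanSpace ℝ (Fin n)))
    (M : Set (EuclideanSpace ℝ (Fin n))) (hMfin : M.Finite) (hMne : M.Nonempty)
    (hMU : M ⊆ unitCell b) :
    bridgeLength (periodicSet b M) =
      sInf {d : ℝ | ∃ r : ℝ, 0 < r ∧ d = 2 * r ∧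
        IsConnected (⋃ p ∈ periodicSet b M, Metric.closedBall p r)} :=
  bridgeLength_eq_inf_connected_balls_general b M hMfin hMne
end
end
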